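/- Let F = b₃z³ + xyz + b₂y³ + b₁x³ with b₁b₂b₃ ≠ 0 (real coefficients). If the matrix exponential exp(m(F)) fixes F up to a nonzero scalar (i.e., exp(m(F)).F = c·F for some c ∈ ℂ*, acting by linear substitution of variables), then b₁² = b₂² = b₃². -/

import Mathlib

open MvPolynomial Matrix

noncomputable section

/-- weight of a monomial exponent: α₁!⋯αₙ!/d! -/
def mwt (d : ℕ) {n : ℕ} (α : Fin n →₀ ℕ) : ℝ :=
  (∏ i, ((α i).factorial : ℝ)) / (d.factorial : ℝ)

/-- the SU(n)-invariant Hermitian product on degree-d forms -/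
def herm (d : ℕ) {n : ℕ} (f g : MvPolynomial (Fin n) ℂ) : ℂ :=
  ∑ α ∈ f.support ∪ g.support,
    (starRingEnd ℂ) (coeff α f) * coeff α g * (mwt d α : ℂ)

/-- H(f)ʲᵢ = (1/(d‖f‖²)) ⟨∂f/∂xⱼ, ∂f/∂xᵢ⟩ -/
def Hmat (n d : ℕ) (f : MvPolynomial (Fin n) ℂ) : Matrix (Fin n) (Fin n) ℂ :=
  fun i j => (1 / (d * herm d f f)) * herm (d - 1) (pderiv j f) (pderiv i f)

/-- moment matrix m(f) = 2(H(f) − (d/n)I) -/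
def moment (n d : ℕ) (f : MvPolynomial (Fin n) ℂ) : Matrix (Fin n) (Fin n) ℂ :=
  (2 : ℂ) • (Hmat n d f - ((d : ℂ) / n) • (1 : Matrix (Fin n) (Fin n) ℂ))

/-- square length ‖m(f)‖² = Re Tr(m(f)·m(f)) -/
def sqLen (n d : ℕ) (f : MvPolynomial (Fin n) ℂ) : ℝ :=
  (Matrix.trace (moment n d f * moment n d f)).re

/-- linear substitution action (A.f)(X) = f(A·X) -/
def act (n : ℕ) (A : Matrix (Fin n) (Fin n) ℂ) (f : MvPolynomial (Fin n) ℂ) :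
    MvPolynomial (Fin n) ℂ :=
  aeval (fun i => ∑ j, A i j • X j) f

end


/-!
The partial derivatives of `F` have pairwise disjoint monomial supports, so `m(F)` is the real
diagonal matrix `diag(r₀, r₁, r₂)` with `rᵢ = (36 bᵢ² - 12 ∑ bⱼ²) / (6 ∑ bⱼ² + 1)`. Hence
`exp(m(F))` rescales `xᵢ` by `e^{rᵢ}` and multiplies the coefficient of `xᵢ³` by `e^{3rᵢ}`.
As `bᵢ ≠ 0`, comparing with `c • F` gives `e^{3rᵢ} = c` for every `i`, so the `rᵢ` coincide,
and with them the `bᵢ²`.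
-/

section ActDiagonal
variable {n : ℕ}

lemma act_diagonal (u : Fin n → ℂ) (f : MvPolynomial (Fin n) ℂ) :
    act n (diagonal u) f = aeval (fun i => u i • X i) f := by
  simp only [act, diagonal_apply, ite_smul, zero_smul, Finset.sum_ite_eq, Finset.mem_univ,
    if_true]

lemma aeval_smul_X_monomial (u : Fin n → ℂ) (α : Fin n →₀ ℕ) (a : ℂ) :
    aeval (fun i => u i • X i) (monomial α a) = monomial α ((∏ i, u i ^ α i) * a) := by
  rw [aeval_monomial, monomial_eq]
  simp only [smul_eq_C_mul, mul_pow, Finsupp.prod_mul, ← map_pow]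
  rw [Finsupp.prod_fintype _ _ (by simp), ← map_prod, algebraMap_eq, ← mul_assoc, ← C_mul,
    mul_comm a]

lemma coeff_act_diagonal (u : Fin n → ℂ) (f : MvPolynomial (Fin n) ℂ) (α : Fin n →₀ ℕ) :
    coeff α (act n (diagonal u) f) = (∏ i, u i ^ α i) * coeff α f := by
  rw [act_diagonal]
  induction f using MvPolynomial.induction_on' with
  | monomial β a =>
    rw [aeval_smul_X_monomial, coeff_monomial, coeff_monomial]
    split_ifs with h
    · rw [h]
    · rw [mul_zero]
  | add p q hp hq => rw [map_add, coeff_add, coeff_add, hp, hq, mul_add]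

lemma prod_pow_eq_of_act_diagonal_eq_smul {u : Fin n → ℂ} {c : ℂ} {f : MvPolynomial (Fin n) ℂ}
    {α : Fin n →₀ ℕ} (h : act n (diagonal u) f = c • f) (hα : coeff α f ≠ 0) :
    ∏ i, u i ^ α i = c := by
  have h' := congrArg (coeff α) h
  rw [coeff_act_diagonal, coeff_smul, smul_eq_mul] at h'
  exact mul_right_cancel₀ hα h'

end ActDiagonal

section Herm
variable {d n : ℕ}

lemma herm_eq_sum_of_subset {f g : MvPolynomial (Fin n) ℂ} {s : Finset (Fin n →₀ ℕ)}
    (hf : f.support ⊆ s) (hg : g.support ⊆ s) :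
    herm d f g = ∑ α ∈ s, (starRingEnd ℂ) (coeff α f) * coeff α g * (mwt d α : ℂ) := by
  refine Finset.sum_subset (Finset.union_subset hf hg) fun α _ hα => ?_
  rw [Finset.mem_union, not_or, notMem_support_iff, notMem_support_iff] at hα
  simp [hα.1]

lemma herm_add_left (f f' g : MvPolynomial (Fin n) ℂ) :
    herm d (f + f') g = herm d f g + herm d f' g := by
  have hs := Finset.subset_union_left (s₁ := f.support ∪ f'.support) (s₂ := g.support)
  have hs' := Finset.subset_union_right (s₁ := f.support ∪ f'.support) (s₂ := g.support)
  rw [herm_eq_sum_of_subset (support_add.trans hs) hs',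
    herm_eq_sum_of_subset (Finset.subset_union_left.trans hs) hs',
    herm_eq_sum_of_subset (Finset.subset_union_right.trans hs) hs', ← Finset.sum_add_distrib]
  simp only [coeff_add, map_add, add_mul]

lemma herm_add_right (f g g' : MvPolynomial (Fin n) ℂ) :
    herm d f (g + g') = herm d f g + herm d f g' := by
  have hs := Finset.subset_union_left (s₁ := f.support) (s₂ := g.support ∪ g'.support)
  have hs' := Finset.subset_union_right (s₁ := f.support) (s₂ := g.support ∪ g'.support)
  rw [herm_eq_sum_of_subset hs (support_add.trans hs'),
    herm_eq_sum_of_subset hs (Finset.subset_union_left.trans hs'),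
    herm_eq_sum_of_subset hs (Finset.subset_union_right.trans hs'), ← Finset.sum_add_distrib]
  simp only [coeff_add, mul_add, add_mul]

lemma herm_monomial (α β : Fin n →₀ ℕ) (a b : ℂ) :
    herm d (monomial α a) (monomial β b) =
      if α = β then (starRingEnd ℂ) a * b * (mwt d α : ℂ) else 0 := by
  rw [herm_eq_sum_of_subset (s := {α, β}) (support_monomial_subset.trans (by simp))
    (support_monomial_subset.trans (by simp))]
  split_ifs with h
  · subst h
    simp
  · rw [Finset.sum_pair h]
    simp [coeff_monomial, h, Ne.symm h]

end Herm

open Finsupp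

noncomputable def expo3 (a b c : ℕ) : Fin 3 →₀ ℕ := single 0 a + single 1 b + single 2 c

@[simp] lemma expo3_apply_zero (a b c : ℕ) : expo3 a b c 0 = a := by simp [expo3]
@[simp] lemma expo3_apply_one (a b c : ℕ) : expo3 a b c 1 = b := by simp [expo3]
@[simp] lemma expo3_apply_two (a b c : ℕ) : expo3 a b c 2 = c := by simp [expo3]

@[simp] lemma expo3_inj {a b c a' b' c' : ℕ} :
    expo3 a b c = expo3 a' b' c' ↔ a = a' ∧ b = b' ∧ c = c' := by
  refine ⟨fun h => ?_, by rintro ⟨rfl, rfl, rfl⟩; rfl⟩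
  exact ⟨by simpa using DFunLike.congr_fun h 0, by simpa using DFunLike.congr_fun h 1,
    by simpa using DFunLike.congr_fun h 2⟩

@[simp] lemma expo3_sub (a b c a' b' c' : ℕ) :
    expo3 a b c - expo3 a' b' c' = expo3 (a - a') (b - b') (c - c') := by
  ext i
  fin_cases i <;> simp

lemma single_zero_eq_expo3 (k : ℕ) : single (0 : Fin 3) k = expo3 k 0 0 := by simp [expo3]
lemma single_one_eq_expo3 (k : ℕ) : single (1 : Fin 3) k = expo3 0 k 0 := by simp [expo3]
lemma single_two_eq_expo3 (k : ℕ) : single (2 : Fin 3) k = expo3 0 0 k := by simp [expo3]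

@[simp] lemma mwt_expo3 (d a b c : ℕ) :
    mwt d (expo3 a b c) = (a.factorial * b.factorial * c.factorial : ℝ) / d.factorial := by
  simp [mwt, Fin.prod_univ_three]

lemma monomial_expo3 (a b c : ℕ) (k : ℂ) :
    monomial (expo3 a b c) k = C k * X 0 ^ a * X 1 ^ b * X 2 ^ c := by
  simp [expo3, X_pow_eq_monomial, C_mul_monomial, monomial_mul]

noncomputable def hesseCubic (b : Fin 3 → ℝ) : MvPolynomial (Fin 3) ℂ :=
  monomial (expo3 1 1 1) 1 + monomial (expo3 3 0 0) (b 0 : ℂ) +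
    monomial (expo3 0 3 0) (b 1 : ℂ) + monomial (expo3 0 0 3) (b 2 : ℂ)

lemma hesseCubic_eq (b₁ b₂ b₃ : ℝ) :
    C (b₃ : ℂ) * (X 2)^3 + X 0 * X 1 * X 2 + C (b₂ : ℂ) * (X 1)^3 + C (b₁ : ℂ) * (X 0)^3 =
      hesseCubic ![b₁, b₂, b₃] := by
  simp only [hesseCubic, monomial_expo3, C_1, Matrix.cons_val_zero, Matrix.cons_val_one,
    Matrix.cons_val_two, Matrix.head_cons, Matrix.tail_cons]
  ring

section HesseCubic
variable (b : Fin 3 → ℝ)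

lemma coeff_single_hesseCubic (i : Fin 3) : coeff (single i 3) (hesseCubic b) = b i := by
  fin_cases i <;> simp [hesseCubic, coeff_monomial, single_zero_eq_expo3, single_one_eq_expo3,
    single_two_eq_expo3]

lemma herm_hesseCubic_self :
    herm 3 (hesseCubic b) (hesseCubic b) = ((∑ i, b i ^ 2 + 1 / 6 : ℝ) : ℂ) := by
  simp only [hesseCubic, herm_add_left, herm_add_right, herm_monomial, expo3_inj, mwt_expo3]
  norm_num [Nat.factorial, Fin.sum_univ_three]
  ring

lemma herm_pderiv_hesseCubic (i j : Fin 3) :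
    herm 2 (pderiv j (hesseCubic b)) (pderiv i (hesseCubic b)) =
      if i = j then ((9 * b i ^ 2 + 1 / 2 : ℝ) : ℂ) else 0 := by
  fin_cases i <;> fin_cases j <;>
    simp [hesseCubic, pderiv_monomial, single_zero_eq_expo3, single_one_eq_expo3,
      single_two_eq_expo3, herm_add_left, herm_add_right, herm_monomial, Nat.factorial,
      map_ofNat] <;>
    ring

noncomputable def momentWeight (i : Fin 3) : ℝ :=
  (36 * b i ^ 2 - 12 * ∑ j, b j ^ 2) / (6 * ∑ j, b j ^ 2 + 1)

variable {b} in
lemma momentWeight_eq_iff {i j : Fin 3} :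
    momentWeight b i = momentWeight b j ↔ b i ^ 2 = b j ^ 2 := by
  have hpos : 0 < 6 * ∑ k, b k ^ 2 + 1 := by positivity
  rw [momentWeight, momentWeight, div_left_inj' hpos.ne']
  constructor <;> intro h <;> linarith

lemma moment_hesseCubic :
    moment 3 3 (hesseCubic b) = diagonal fun i => (momentWeight b i : ℂ) := by
  have hpos : (0 : ℝ) < 6 * ∑ k, b k ^ 2 + 1 := by positivity
  have hN : (6 * ∑ k, (b k : ℂ) ^ 2 + 1) ≠ 0 := by exact_mod_cast hpos.ne'
  ext i j
  simp only [moment, Hmat, Nat.reduceSub, herm_pderiv_hesseCubic, herm_hesseCubic_self,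
    Matrix.smul_apply, Matrix.sub_apply, one_apply, diagonal_apply, smul_eq_mul, momentWeight]
  split_ifs with h
  · subst h
    push_cast
    rw [show 3 * (∑ k, (b k : ℂ) ^ 2 + 1 / 6) = (6 * ∑ k, (b k : ℂ) ^ 2 + 1) / 2 by ring]
    field_simp
    ring
  · simp

end HesseCubic

lemma exp_diagonal_ofReal {ι : Type*} [Fintype ι] [DecidableEq ι] (r : ι → ℝ) :
    NormedSpace.exp (diagonal fun i => (r i : ℂ)) = diagonal fun i => (Real.exp (r i) : ℂ) := by
  rw [Matrix.exp_diagonal]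
  congr 1
  funext i
  rw [Pi.coe_exp, ← Complex.exp_eq_exp_ℂ, Complex.ofReal_exp]

theorem stmt9_general (b₁ b₂ b₃ : ℝ) (hb : b₁ * b₂ * b₃ ≠ 0) (c : ℂ)
    (hfix :
      act 3 (NormedSpace.exp
          (moment 3 3 (C (b₃ : ℂ) * (X 2)^3 + X 0 * X 1 * X 2 +
            C (b₂ : ℂ) * (X 1)^3 + C (b₁ : ℂ) * (X 0)^3)))
        (C (b₃ : ℂ) * (X 2)^3 + X 0 * X 1 * X 2 +
          C (b₂ : ℂ) * (X 1)^3 + C (b₁ : ℂ) * (X 0)^3) =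
      c • (C (b₃ : ℂ) * (X 2)^3 + X 0 * X 1 * X 2 +
          C (b₂ : ℂ) * (X 1)^3 + C (b₁ : ℂ) * (X 0)^3)) :
    b₁^2 = b₂^2 ∧ b₂^2 = b₃^2 := by
  set b : Fin 3 → ℝ := ![b₁, b₂, b₃]
  have hb0 (i : Fin 3) : b i ≠ 0 := by
    rw [mul_ne_zero_iff, mul_ne_zero_iff] at hb
    fin_cases i <;> simp [b, hb]
  rw [hesseCubic_eq, moment_hesseCubic, exp_diagonal_ofReal] at hfix
  have hcube (i : Fin 3) : ((Real.exp (3 * momentWeight b i) : ℝ) : ℂ) = c := by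
    have hcoeff : coeff (single i 3) (hesseCubic b) ≠ 0 := by
      simpa [coeff_single_hesseCubic] using hb0 i
    have := prod_pow_eq_of_act_diagonal_eq_smul hfix hcoeff
    simpa [Finsupp.single_apply, pow_ite, ← Complex.exp_nat_mul] using this
  have hweight (i j : Fin 3) : momentWeight b i = momentWeight b j := by
    have := Real.exp_injective (Complex.ofReal_injective ((hcube i).trans (hcube j).symm))
    linarith
  exact ⟨momentWeight_eq_iff.1 (hweight 0 1), momentWeight_eq_iff.1 (hweight 1 2)⟩

/-- For F = b₃z³ + xyz + b₂y³ + b₁x³ with b₁b₂b₃ ≠ 0 real: if exp(m(F)) fixes F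
up to a nonzero scalar, then b₁² = b₂² = b₃². -/
theorem stmt9 (b₁ b₂ b₃ : ℝ) (hb : b₁ * b₂ * b₃ ≠ 0) (c : ℂ) (hc : c ≠ 0)
    (hfix :
      act 3 (NormedSpace.exp
          (moment 3 3 (C (b₃ : ℂ) * (X 2)^3 + X 0 * X 1 * X 2 +
            C (b₂ : ℂ) * (X 1)^3 + C (b₁ : ℂ) * (X 0)^3)))
        (C (b₃ : ℂ) * (X 2)^3 + X 0 * X 1 * X 2 +
          C (b₂ : ℂ) * (X 1)^3 + C (b₁ : ℂ) * (X 0)^3) =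
      c • (C (b₃ : ℂ) * (X 2)^3 + X 0 * X 1 * X 2 +
          C (b₂ : ℂ) * (X 1)^3 + C (b₁ : ℂ) * (X 0)^3)) :
    b₁^2 = b₂^2 ∧ b₂^2 = b₃^2 :=
  stmt9_general b₁ b₂ b₃ hb c hfix
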